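/- Let λ be a frequency, (a_n) a complex sequence, k > ℓ ≥ 0, and f ∈ H^λ_{∞,ℓ}[Re > 0] with coefficients (a_n), with horizontal limit function f*. Then for every δ > 0, lim_{x→∞} ∫_{{y ∈ ℝ : |y| ≥ δ}} f*(iy) · R^{k,ℓ}(x,y)/(1 + iy)^ℓ dy = 0. -/

import Mathlib

open Complex MeasureTheory Filter Topology Set
open scoped Classical

noncomputable section

/-- A frequency: a strictly increasing sequence of nonnegative reals tending to infinity. -/
def IsFrequency (lam : ℕ → ℝ) : Prop :=
  StrictMono lam ∧ (∀ n, 0 ≤ lam n) ∧ Tendsto lam atTop atTop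

/-- The `(λ,k)`-Riesz mean `R_x^{λ,k}(s) = Σ_{λ_n < x} a_n e^{-λ_n s} (1 - λ_n/x)^k`. -/
def RieszMean (lam : ℕ → ℝ) (a : ℕ → ℂ) (k : ℝ) (x : ℝ) (s : ℂ) : ℂ :=
  ∑' n, if lam n < x then a n * Complex.exp (-(lam n : ℂ) * s) * (((1 - lam n / x) ^ k : ℝ) : ℂ)
    else 0

/-- `f` possesses a `λ`-Riesz germ with coefficients `a`: on some nonempty open subset of the
right half-plane, `f` is the pointwise limit of the `(λ,m)`-Riesz means for some `m ≥ 0`. -/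
def HasRieszGerm (lam : ℕ → ℝ) (a : ℕ → ℂ) (f : ℂ → ℂ) : Prop :=
  ∃ m : ℝ, 0 ≤ m ∧ ∃ U : Set ℂ, IsOpen U ∧ U.Nonempty ∧ U ⊆ {s : ℂ | 0 < s.re} ∧
    ∀ s ∈ U, Tendsto (fun x : ℝ => RieszMean lam a m x s) atTop (nhds (f s))

/-- Membership in `H^λ_{∞,ℓ}[Re > 0]` with coefficients `a`. -/
def MemHlam (lam : ℕ → ℝ) (a : ℕ → ℂ) (l : ℝ) (f : ℂ → ℂ) : Prop :=
  DifferentiableOn ℂ f {s : ℂ | 0 < s.re} ∧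
  (∃ C : ℝ, ∀ s : ℂ, 0 < s.re → ‖f s‖ ≤ C * (1 + ‖s‖) ^ l) ∧
  HasRieszGerm lam a f

/-- The horizontal limit function `f*(it) = lim_{ε→0⁺} f(ε + it)` (and `0` if no limit exists). -/
def horizLim (f : ℂ → ℂ) (t : ℝ) : ℂ :=
  if h : ∃ L : ℂ, Tendsto (fun e : ℝ => f ((e : ℂ) + (t : ℂ) * Complex.I))
      (nhdsWithin 0 (Set.Ioi 0)) (nhds L)
  then h.choose else 0

/-- The Poisson kernel `P_u(t) = (1/π) u/(u² + t²)`. -/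
def poisson (u t : ℝ) : ℝ := (1 / Real.pi) * u / (u ^ 2 + t ^ 2)

/-- The kernel `K_x^k(t) = (Γ(1+k) e / (2π)) · x / (1 + ixt)^{1+k}`. -/
def Kker (k : ℝ) (x t : ℝ) : ℂ :=
  ((Real.Gamma (1 + k) * Real.exp 1 / (2 * Real.pi) : ℝ) : ℂ) * (x : ℂ) /
    (1 + Complex.I * (x : ℂ) * (t : ℂ)) ^ ((1 + k : ℝ) : ℂ)

/-- The kernel `R^{k,ℓ}(x,y) = ∫ P_{x⁻¹}(t-y) e^{itx} (1 + x⁻¹ + it)^ℓ K_x^k(t) dt`. -/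
def Rker (k l : ℝ) (x y : ℝ) : ℂ :=
  ∫ t : ℝ, ((poisson x⁻¹ (t - y) : ℝ) : ℂ) * Complex.exp (Complex.I * (t : ℂ) * (x : ℂ)) *
    (1 + ((x⁻¹ : ℝ) : ℂ) + Complex.I * (t : ℂ)) ^ ((l : ℝ) : ℂ) * Kker k x t


/-! The growth bound `‖f s‖ ≤ C (1 + ‖s‖)^ℓ` passes to `f*`, so `f*(iy) / (1 + iy)^ℓ` is bounded
and it suffices to find an integrable `g` with `|R^{k,ℓ}(x,y)| ≤ (x^{-k} + x^{-1}) g(y)` for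
`|y| ≥ δ`. Split the `t`-integral defining `R^{k,ℓ}(x,y)` at `|t - y| = |y|/2`. Near `y` we have
`|t| ≍ 1 + |y|`, hence `|(1 + x⁻¹ + it)^ℓ K_x^k(t)| ≲ x^{-k} (1 + |y|)^{ℓ-1-k}`, and the Poisson
kernel has mass one. Away from `y`, `P_{1/x}(t - y) ≲ x⁻¹ (1 + |y|)^{-2}`, while
`|(1 + x⁻¹ + it)^ℓ K_x^k(t)| ≲ x (1 + x|t|)^{ℓ-1-k}` has `t`-integral `O(1)` because `ℓ < k`. -/

lemma poisson_nonneg {u : ℝ} (hu : 0 ≤ u) (t : ℝ) : 0 ≤ poisson u t := by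
  unfold poisson
  positivity

lemma poisson_eq {u : ℝ} (hu : 0 < u) (t : ℝ) :
    poisson u t = (Real.pi * u)⁻¹ * (1 + (t * u⁻¹) ^ 2)⁻¹ := by
  unfold poisson
  field_simp

lemma integrable_poisson {u : ℝ} (hu : 0 < u) : Integrable (poisson u) := by
  simp_rw [funext (poisson_eq hu)]
  exact (integrable_inv_one_add_sq.comp_mul_right' (inv_ne_zero hu.ne')).const_mul _

lemma integral_poisson {u : ℝ} (hu : 0 < u) : ∫ t, poisson u t = 1 := by
  simp_rw [poisson_eq hu]
  rw [integral_const_mul, Measure.integral_comp_mul_right (fun s : ℝ => (1 + s ^ 2)⁻¹),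
    integral_univ_inv_one_add_sq, inv_inv, abs_of_pos hu, smul_eq_mul]
  field_simp

lemma poisson_le_of_le_abs {u r t : ℝ} (hu : 0 ≤ u) (hr : 0 < r) (hrt : r ≤ |t|) :
    poisson u t ≤ u / (Real.pi * r ^ 2) := by
  have hrt2 : r ^ 2 ≤ u ^ 2 + t ^ 2 := by nlinarith [sq_abs t, abs_nonneg t]
  unfold poisson
  rw [one_div_mul_eq_div, div_div]
  gcongr

lemma norm_one_add_I_mul (s : ℝ) : ‖1 + I * s‖ = √(1 + s ^ 2) := by
  simpa [add_comm, mul_comm] using Complex.norm_add_mul_I 1 s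

lemma one_add_abs_le_sqrt_two_mul_norm (s : ℝ) : 1 + |s| ≤ √2 * ‖1 + I * s‖ := by
  rw [norm_one_add_I_mul, ← Real.sqrt_mul zero_le_two]
  exact Real.le_sqrt_of_sq_le (by nlinarith [sq_abs s, sq_nonneg (1 - |s|)])

lemma integrable_one_add_abs_rpow {p : ℝ} (hp : p < -1) :
    Integrable fun s : ℝ => (1 + |s|) ^ p := by
  have := integrable_one_add_norm (E := ℝ) (μ := volume) (r := -p)
    (by simp only [Module.finrank_self, Nat.cast_one]; linarith)
  simpa only [neg_neg, Real.norm_eq_abs] using this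

lemma exists_norm_Kker_le {k : ℝ} (hk : 0 ≤ 1 + k) :
    ∃ c, 0 ≤ c ∧ ∀ x, 0 < x → ∀ t : ℝ, ‖Kker k x t‖ ≤ c * x * (1 + |x * t|) ^ (-(1 + k)) := by
  refine ⟨‖((Real.Gamma (1 + k) * Real.exp 1 / (2 * Real.pi) : ℝ) : ℂ)‖ * √2 ^ (1 + k),
    by positivity, fun x hx t => ?_⟩
  have hxt : 1 + I * (x : ℂ) * (t : ℂ) = 1 + I * ((x * t : ℝ) : ℂ) := by push_cast; ring
  have hpos : 0 < ‖1 + I * ((x * t : ℝ) : ℂ)‖ := by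
    rw [norm_one_add_I_mul]; positivity
  have hle : (1 + |x * t|) ^ (1 + k) ≤ √2 ^ (1 + k) * ‖1 + I * ((x * t : ℝ) : ℂ)‖ ^ (1 + k) := by
    rw [← Real.mul_rpow (by positivity) hpos.le]
    exact Real.rpow_le_rpow (by positivity) (one_add_abs_le_sqrt_two_mul_norm _) hk
  unfold Kker
  rw [norm_div, norm_mul, Complex.norm_cpow_real, Complex.norm_real x, Real.norm_of_nonneg hx.le,
    hxt, Real.rpow_neg (by positivity), div_le_iff₀ (by positivity)]
  set C := ‖((Real.Gamma (1 + k) * Real.exp 1 / (2 * Real.pi) : ℝ) : ℂ)‖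
  calc C * x = C * x * ((1 + |x * t|) ^ (1 + k))⁻¹ * (1 + |x * t|) ^ (1 + k) := by
        field_simp
    _ ≤ C * x * ((1 + |x * t|) ^ (1 + k))⁻¹ *
        (√2 ^ (1 + k) * ‖1 + I * ((x * t : ℝ) : ℂ)‖ ^ (1 + k)) := by gcongr
    _ = _ := by ring

lemma norm_one_add_inv_add_I_mul_le {x : ℝ} (hx : 1 ≤ x) (t : ℝ) :
    ‖1 + ((x⁻¹ : ℝ) : ℂ) + I * t‖ ≤ 2 * (1 + |t|) := by
  have hx' : x⁻¹ ≤ 1 := inv_le_one_of_one_le₀ hx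
  calc ‖1 + ((x⁻¹ : ℝ) : ℂ) + I * t‖ ≤ ‖(1 : ℂ)‖ + ‖((x⁻¹ : ℝ) : ℂ)‖ + ‖I * t‖ := norm_add₃_le
    _ = 1 + x⁻¹ + |t| := by
        rw [norm_one, Complex.norm_real, Real.norm_of_nonneg (by positivity), norm_mul, norm_I,
          one_mul, Complex.norm_real, Real.norm_eq_abs]
    _ ≤ 2 * (1 + |t|) := by linarith [abs_nonneg t]

def RkerIntegrand (k l x y t : ℝ) : ℂ :=
  ((poisson x⁻¹ (t - y) : ℝ) : ℂ) * Complex.exp (Complex.I * (t : ℂ) * (x : ℂ)) *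
    (1 + ((x⁻¹ : ℝ) : ℂ) + Complex.I * (t : ℂ)) ^ ((l : ℝ) : ℂ) * Kker k x t

lemma Rker_eq_integral_RkerIntegrand (k l x y : ℝ) :
    Rker k l x y = ∫ t, RkerIntegrand k l x y t :=
  rfl

lemma norm_RkerIntegrand {x : ℝ} (hx : 0 ≤ x) (k l y t : ℝ) :
    ‖RkerIntegrand k l x y t‖ =
      poisson x⁻¹ (t - y) * ‖1 + ((x⁻¹ : ℝ) : ℂ) + I * t‖ ^ l * ‖Kker k x t‖ := by
  rw [RkerIntegrand, norm_mul, norm_mul, norm_mul, Complex.norm_real,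
    Real.norm_of_nonneg (poisson_nonneg (inv_nonneg.2 hx) _), Complex.norm_exp,
    Complex.norm_cpow_real]
  simp

lemma rpow_mul_one_add_mul_rpow_neg_le {x ρ Y τ l k : ℝ} (hx : 0 < x) (hρ : 0 < ρ) (hY : 0 < Y)
    (hτ : ρ * Y ≤ τ) (hτY : 1 + τ ≤ 2 * Y) (hl : 0 ≤ l) (hk : 0 ≤ 1 + k) :
    x * (1 + τ) ^ l * (1 + x * τ) ^ (-(1 + k)) ≤
      2 ^ l * ρ ^ (-(1 + k)) * x ^ (-k) * Y ^ (l - 1 - k) := by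
  have hτ0 : 0 ≤ τ := le_trans (by positivity) hτ
  have hxx : x * x ^ (-(1 + k)) = x ^ (-k) := by
    rw [show -k = 1 + -(1 + k) by ring, Real.rpow_add hx, Real.rpow_one]
  calc x * (1 + τ) ^ l * (1 + x * τ) ^ (-(1 + k))
      ≤ x * (2 * Y) ^ l * (x * ρ * Y) ^ (-(1 + k)) := by
        gcongr x * ?_ * ?_
        · exact Real.rpow_le_rpow (by positivity) hτY hl
        · exact Real.rpow_le_rpow_of_nonpos (by positivity) (by nlinarith) (by linarith)
    _ = 2 ^ l * ρ ^ (-(1 + k)) * (x * x ^ (-(1 + k))) * (Y ^ l * Y ^ (-(1 + k))) := by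
        rw [Real.mul_rpow (x := x * ρ) (by positivity) hY.le, Real.mul_rpow hx.le hρ.le,
          Real.mul_rpow zero_le_two hY.le]
        ring
    _ = 2 ^ l * ρ ^ (-(1 + k)) * x ^ (-k) * Y ^ (l - 1 - k) := by
        rw [← Real.rpow_add hY, hxx]
        ring_nf

lemma exists_norm_RkerIntegrand_le {k l δ : ℝ} (hl : 0 ≤ l) (hk : 0 ≤ 1 + k) (hδ : 0 < δ) :
    ∃ A B : ℝ, 0 ≤ A ∧ 0 ≤ B ∧ ∀ x, 1 ≤ x → ∀ y, δ ≤ |y| → ∀ t,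
      ‖RkerIntegrand k l x y t‖ ≤ A * x ^ (-k) * (1 + |y|) ^ (l - 1 - k) * poisson x⁻¹ (t - y) +
        B * (1 + |y|) ^ (-2 : ℝ) * (1 + |x * t|) ^ (l - 1 - k) := by
  obtain ⟨c, hc0, hc⟩ := exists_norm_Kker_le hk
  set ρ := δ / (2 * (1 + δ))
  have hρ : 0 < ρ := by positivity
  refine ⟨c * 2 ^ l * (2 ^ l * ρ ^ (-(1 + k))), c * 2 ^ l * (Real.pi * ρ ^ 2)⁻¹,
    by positivity, by positivity, fun x hx y hy t => ?_⟩
  have hx0 : 0 < x := by linarith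
  set Y := 1 + |y|
  have hY : 0 < Y := by positivity
  have hρY : ρ * Y ≤ |y| / 2 := by
    rw [div_mul_eq_mul_div, div_le_iff₀ (by positivity)]
    nlinarith
  have hxt : |x * t| = x * |t| := by rw [abs_mul, abs_of_pos hx0]
  have hWK : ‖1 + ((x⁻¹ : ℝ) : ℂ) + I * t‖ ^ l * ‖Kker k x t‖ ≤
      c * 2 ^ l * (x * (1 + |t|) ^ l * (1 + x * |t|) ^ (-(1 + k))) := by
    calc ‖1 + ((x⁻¹ : ℝ) : ℂ) + I * t‖ ^ l * ‖Kker k x t‖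
        ≤ (2 * (1 + |t|)) ^ l * (c * x * (1 + |x * t|) ^ (-(1 + k))) :=
          mul_le_mul (Real.rpow_le_rpow (norm_nonneg _) (norm_one_add_inv_add_I_mul_le hx t) hl)
            (hc x hx0 t) (norm_nonneg _) (by positivity)
      _ = _ := by
          rw [hxt, Real.mul_rpow zero_le_two (by positivity)]
          ring
  have hP := poisson_nonneg (inv_nonneg.2 hx0.le) (t - y)
  rw [norm_RkerIntegrand hx0.le, mul_assoc]
  rcases le_or_gt |t - y| (|y| / 2) with hnear | hfar
  · have hτ : ρ * Y ≤ |t| := by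
      have := abs_sub_abs_le_abs_sub y t
      rw [abs_sub_comm] at this
      linarith
    have hτY : 1 + |t| ≤ 2 * Y := by
      have := abs_sub_abs_le_abs_sub t y
      linarith
    have hnear' := rpow_mul_one_add_mul_rpow_neg_le hx0 hρ hY hτ hτY hl hk
    calc poisson x⁻¹ (t - y) * (‖1 + ((x⁻¹ : ℝ) : ℂ) + I * t‖ ^ l * ‖Kker k x t‖)
        ≤ poisson x⁻¹ (t - y) *
            (c * 2 ^ l * (2 ^ l * ρ ^ (-(1 + k)) * x ^ (-k) * Y ^ (l - 1 - k))) :=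
          mul_le_mul_of_nonneg_left (hWK.trans (by gcongr)) hP
      _ = c * 2 ^ l * (2 ^ l * ρ ^ (-(1 + k))) * x ^ (-k) * Y ^ (l - 1 - k) *
            poisson x⁻¹ (t - y) := by ring
      _ ≤ _ := le_add_of_nonneg_right (by positivity)
  · have hPle : poisson x⁻¹ (t - y) ≤ x⁻¹ / (Real.pi * (ρ * Y) ^ 2) :=
      poisson_le_of_le_abs (by positivity) (by positivity) (by linarith)
    have hτ : (1 + |t|) ^ l ≤ (1 + x * |t|) ^ l := by
      gcongr
      exact le_mul_of_one_le_left (abs_nonneg t) hx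
    calc poisson x⁻¹ (t - y) * (‖1 + ((x⁻¹ : ℝ) : ℂ) + I * t‖ ^ l * ‖Kker k x t‖)
        ≤ x⁻¹ / (Real.pi * (ρ * Y) ^ 2) *
            (c * 2 ^ l * (x * (1 + x * |t|) ^ l * (1 + x * |t|) ^ (-(1 + k)))) :=
          mul_le_mul hPle (hWK.trans (by gcongr)) (by positivity) (by positivity)
      _ = c * 2 ^ l * (Real.pi * ρ ^ 2)⁻¹ * Y ^ (-2 : ℝ) * (1 + |x * t|) ^ (l - 1 - k) := by
          rw [Real.rpow_neg hY.le, Real.rpow_two, hxt, sub_sub, sub_eq_add_neg l,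
            Real.rpow_add (by positivity)]
          field_simp
      _ ≤ _ := le_add_of_nonneg_left (by positivity)

lemma exists_norm_Rker_le {k l δ : ℝ} (hl : 0 ≤ l) (hk : l < k) (hδ : 0 < δ) :
    ∃ g : ℝ → ℝ, Integrable g ∧ ∀ x, 1 ≤ x → ∀ y, δ ≤ |y| →
      ‖Rker k l x y‖ ≤ (x ^ (-k) + x⁻¹) * g y := by
  obtain ⟨A, B, hA, hB, hpt⟩ := exists_norm_RkerIntegrand_le hl (by linarith : 0 ≤ 1 + k) hδ
  have hφ : Integrable fun s : ℝ => (1 + |s|) ^ (l - 1 - k) :=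
    integrable_one_add_abs_rpow (by linarith)
  set J := ∫ s : ℝ, (1 + |s|) ^ (l - 1 - k)
  have hJ : 0 ≤ J := integral_nonneg fun s => by positivity
  refine ⟨fun y => A * (1 + |y|) ^ (l - 1 - k) + B * J * (1 + |y|) ^ (-2 : ℝ),
    (hφ.const_mul A).add ((integrable_one_add_abs_rpow (by norm_num)).const_mul _),
    fun x hx y hy => ?_⟩
  have hx0 : 0 < x := by linarith
  set Y₁ := (1 + |y|) ^ (l - 1 - k)
  set Y₂ := (1 + |y|) ^ (-2 : ℝ)
  have hP : Integrable fun t => poisson x⁻¹ (t - y) :=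
    (integrable_poisson (inv_pos.2 hx0)).comp_sub_right y
  have hφx : Integrable fun t : ℝ => (1 + |x * t|) ^ (l - 1 - k) :=
    hφ.comp_mul_left' hx0.ne'
  rw [Rker_eq_integral_RkerIntegrand]
  calc ‖∫ t, RkerIntegrand k l x y t‖
      ≤ ∫ t, (A * x ^ (-k) * Y₁ * poisson x⁻¹ (t - y) + B * Y₂ * (1 + |x * t|) ^ (l - 1 - k)) :=
        norm_integral_le_of_norm_le ((hP.const_mul _).add (hφx.const_mul _))
          (ae_of_all _ (hpt x hx y hy))
    _ = A * x ^ (-k) * Y₁ + B * Y₂ * (x⁻¹ * J) := by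
        rw [integral_add (hP.const_mul _) (hφx.const_mul _), integral_const_mul,
          integral_const_mul, integral_sub_right_eq_self (poisson x⁻¹) y,
          integral_poisson (inv_pos.2 hx0), Measure.integral_comp_mul_left
            (fun s => (1 + |s|) ^ (l - 1 - k)) x, smul_eq_mul, abs_of_pos (inv_pos.2 hx0), mul_one]
    _ ≤ (x ^ (-k) + x⁻¹) * (A * Y₁ + B * J * Y₂) := by
        rw [show (x ^ (-k) + x⁻¹) * (A * Y₁ + B * J * Y₂) = A * x ^ (-k) * Y₁ + B * Y₂ * (x⁻¹ * J) +
          (x ^ (-k) * (B * J * Y₂) + x⁻¹ * (A * Y₁)) by ring]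
        exact le_add_of_nonneg_right (by positivity)

lemma norm_horizLim_le {f : ℂ → ℂ} {C l : ℝ} (hl : 0 ≤ l) (hC : 0 ≤ C)
    (hf : ∀ s : ℂ, 0 < s.re → ‖f s‖ ≤ C * (1 + ‖s‖) ^ l) (y : ℝ) :
    ‖horizLim f y‖ ≤ C * (2 + |y|) ^ l := by
  unfold horizLim
  split_ifs with h
  · refine le_of_tendsto ((continuous_norm.tendsto _).comp h.choose_spec) ?_
    filter_upwards [Ioo_mem_nhdsGT (zero_lt_one' ℝ)] with e ⟨he0, he1⟩
    have hs : ‖(e : ℂ) + y * I‖ ≤ 1 + |y| := by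
      calc ‖(e : ℂ) + y * I‖ ≤ ‖(e : ℂ)‖ + ‖(y : ℂ) * I‖ := norm_add_le _ _
        _ ≤ 1 + |y| := by
          rw [norm_mul, norm_I, mul_one, Complex.norm_real, Complex.norm_real,
            Real.norm_of_nonneg he0.le, Real.norm_eq_abs]
          linarith
    calc ‖f (e + y * I)‖ ≤ C * (1 + ‖(e : ℂ) + y * I‖) ^ l := hf _ (by simpa using he0)
      _ ≤ C * (2 + |y|) ^ l := by gcongr C * ?_ ^ l; linarith
  · rw [norm_zero]
    positivity

lemma exists_norm_horizLim_div_le {f : ℂ → ℂ} {l : ℝ} (hl : 0 ≤ l)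
    (hf : ∃ C, ∀ s : ℂ, 0 < s.re → ‖f s‖ ≤ C * (1 + ‖s‖) ^ l) :
    ∃ M, ∀ y : ℝ, ‖horizLim f y / (1 + I * y) ^ (l : ℂ)‖ ≤ M := by
  obtain ⟨C, hC⟩ := hf
  have hC0 : 0 ≤ C :=
    nonneg_of_mul_nonneg_left ((norm_nonneg _).trans (hC 1 (by simp))) (by positivity)
  refine ⟨C * (2 * √2) ^ l, fun y => ?_⟩
  have hpos : 0 < ‖1 + I * y‖ := by
    rw [norm_one_add_I_mul]
    positivity
  have h2y : 2 + |y| ≤ 2 * √2 * ‖1 + I * y‖ := by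
    linarith [one_add_abs_le_sqrt_two_mul_norm y, abs_nonneg y]
  rw [norm_div, Complex.norm_cpow_real, div_le_iff₀ (by positivity)]
  calc ‖horizLim f y‖ ≤ C * (2 + |y|) ^ l := norm_horizLim_le hl hC0 hC y
    _ ≤ C * (2 * √2 * ‖1 + I * y‖) ^ l := by gcongr
    _ = C * (2 * √2) ^ l * ‖1 + I * y‖ ^ l := by
        rw [Real.mul_rpow (by positivity) hpos.le, mul_assoc]

theorem statement13_general (lam : ℕ → ℝ) (a : ℕ → ℂ) (k l : ℝ)
    (hl : 0 ≤ l) (hk : l < k) (f : ℂ → ℂ) (hf : MemHlam lam a l f)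
    (δ : ℝ) (hδ : 0 < δ) :
    Tendsto (fun x : ℝ => ∫ y in {y : ℝ | δ ≤ |y|},
        horizLim f y * Rker k l x y / (1 + Complex.I * (y : ℂ)) ^ ((l : ℝ) : ℂ))
      atTop (nhds 0) := by
  obtain ⟨M, hM⟩ := exists_norm_horizLim_div_le hl hf.2.1
  obtain ⟨g, hg, hRg⟩ := exists_norm_Rker_le hl hk hδ
  set S := {y : ℝ | δ ≤ |y|}
  have hS : MeasurableSet S := measurableSet_le measurable_const continuous_abs.measurable
  have hbound : ∀ᶠ x in atTop, ‖∫ y in S,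
      horizLim f y * Rker k l x y / (1 + I * (y : ℂ)) ^ ((l : ℝ) : ℂ)‖ ≤
        M * (x ^ (-k) + x⁻¹) * ∫ y in S, g y := by
    filter_upwards [eventually_ge_atTop 1] with x hx
    rw [mul_assoc, ← integral_const_mul, ← integral_const_mul]
    refine norm_integral_le_of_norm_le ((hg.const_mul _).const_mul _).integrableOn
      ((ae_restrict_iff' hS).2 (ae_of_all _ fun y hy => ?_))
    rw [mul_div_right_comm, norm_mul]
    exact mul_le_mul (hM y) (hRg x hx y hy) (norm_nonneg _) ((norm_nonneg _).trans (hM y))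
  have hlim : Tendsto (fun x : ℝ => M * (x ^ (-k) + x⁻¹) * ∫ y in S, g y) atTop (𝓝 0) := by
    simpa using (((tendsto_rpow_neg_atTop (by linarith)).add tendsto_inv_atTop_zero).const_mul
      M).mul_const (∫ y in S, g y)
  exact squeeze_zero_norm' hbound hlim

/-- For `k > ℓ ≥ 0`, `f ∈ H^λ_{∞,ℓ}[Re > 0]` with horizontal limit
function `f*`, and every `δ > 0`:
`lim_{x→∞} ∫_{|y|≥δ} f*(iy) R^{k,ℓ}(x,y)/(1+iy)^ℓ dy = 0`. -/
theorem statement13 (lam : ℕ → ℝ) (hlam : IsFrequency lam) (a : ℕ → ℂ) (k l : ℝ)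
    (hl : 0 ≤ l) (hk : l < k) (f : ℂ → ℂ) (hf : MemHlam lam a l f)
    (δ : ℝ) (hδ : 0 < δ) :
    Tendsto (fun x : ℝ => ∫ y in {y : ℝ | δ ≤ |y|},
        horizLim f y * Rker k l x y / (1 + Complex.I * (y : ℂ)) ^ ((l : ℝ) : ℂ))
      atTop (nhds 0) :=
  statement13_general lam a k l hl hk f hf δ hδ
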